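/- arXiv:1702.02611 — 2 statements merged into one kernel-verified Lean document; each statement's English description precedes it below -/
import Mathlib

section
/- Let m be a continuous topological partial action of a Polish group G on a Polish space X with G*X a G_δ subset of G × X. Then the orbit equivalence relation E^p_G is idealistic: there is an assignment C ↦ I_C of a σ-ideal I_C on subsets of each E^p_G-equivalence class C such that C ∉ I_C, and for every Borel A ⊆ X × X, the set A_I = {x : {y ∈ [x] : (x,y) ∈ A} ∈ I_{[x]}} is Borel. -/
/-!
The ideal on the class `[x]` is the push-forward of the meagre ideal of `G^x` along
`g ↦ g · x`. Right translation `g ↦ g h⁻¹` is a homeomorphism `G^x ≃ₜ G^(h · x)`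
compatible with the orbit maps, so the ideal depends only on the class; and `G^x`, a `Gδ`
subset of a Polish group, is a Baire space, so the class itself is not in the ideal.

The set `A_I` is the complement of the Vaught transform
`{x | {g ∈ G^x ∩ V | (x, g · x) ∈ A} is non-meagre}` at `V = G`. These transforms are Borel
for every open `V`, by induction on the Borel set `A`: for open `A` they are open, they
commute with countable unions, and for complements one localizes: a Baire measurable set is
non-meagre in `V` iff it is comeagre in some nonempty basic open subset of `V`, and a
countable basis of `G` serves all `x` at once.
-/

structure PartialAction (G : Type*) (X : Type*) [Group G] where
  dom : G → Set X
  act : G → X → X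
  mem_dom_one : ∀ x, x ∈ dom 1
  act_one : ∀ x, act 1 x = x
  mem_dom_inv : ∀ g x, x ∈ dom g → act g x ∈ dom g⁻¹
  act_inv_act : ∀ g x, x ∈ dom g → act g⁻¹ (act g x) = x
  mem_dom_mul : ∀ g h x, x ∈ dom h → act h x ∈ dom g → x ∈ dom (g * h)
  act_mul : ∀ g h x, x ∈ dom h → act h x ∈ dom g → act (g * h) x = act g (act h x)

namespace PartialAction

variable {G X : Type*} [Group G]

/-- The orbit equivalence relation `E^p_G` of a partial action. -/
def orbitRel (pa : PartialAction G X) (x y : X) : Prop :=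
  ∃ g, x ∈ pa.dom g ∧ pa.act g x = y

/-- `G^x = {g : G | g · x is defined}`. -/
def stabDom (pa : PartialAction G X) (x : X) : Set G := {g | x ∈ pa.dom g}

/-- The orbit equivalence relation of the partial action `\widehat m` on `G × X`,
`\widehat m_u (h, x) = (h u⁻¹, u · x)`. -/
def hatOrbitRel (pa : PartialAction G X) (p q : G × X) : Prop :=
  ∃ u, p.2 ∈ pa.dom u ∧ q = (p.1 * u⁻¹, pa.act u p.2)

/-- Vaught transform `A^{△V}`. -/
def vaughtDelta [TopologicalSpace G] (pa : PartialAction G X) (A : Set X) (V : Set G) : Set X :=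
  {x | ¬ IsMeagre {g : ↥(V ∩ pa.stabDom x) | pa.act (g : G) x ∈ A}}

/-- Vaught transform `A^{*V}`. -/
def vaughtStar [TopologicalSpace G] (pa : PartialAction G X) (A : Set X) (V : Set G) : Set X :=
  {x | {g : ↥(V ∩ pa.stabDom x) | pa.act (g : G) x ∈ A} ∈ residual ↥(V ∩ pa.stabDom x)}

end PartialAction

open Set Topology TopologicalSpace

theorem IsGδ.baireSpace_of_polishSpace {α : Type*} [TopologicalSpace α] [PolishSpace α]
    {s : Set α} (hs : IsGδ s) : BaireSpace s := by
  have : PolishSpace (closure s) := isClosed_closure.polishSpace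
  have : BaireSpace ((↑) ⁻¹' s : Set (closure s)) :=
    (hs.preimage continuous_subtype_val).baireSpace_of_dense
      (by simp [Subtype.dense_iff, inter_eq_right.mpr subset_closure])
  let e : ((↑) ⁻¹' s : Set (closure s)) ≃ₜ s :=
    { toFun x := ⟨x, x.2⟩
      invFun x := ⟨⟨x, subset_closure x.2⟩, x.2⟩
      continuous_toFun := by fun_prop
      continuous_invFun := by fun_prop }
  exact e.baireSpace

theorem Homeomorph.isMeagre_preimage {α β : Type*} [TopologicalSpace α] [TopologicalSpace β]
    (e : α ≃ₜ β) {s : Set β} : IsMeagre (e ⁻¹' s) ↔ IsMeagre s := by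
  rw [IsMeagre, IsMeagre, ← e.residual_map_eq, Filter.mem_map, preimage_compl]

theorem Continuous.baireMeasurableSet_preimage {α β : Type*} [TopologicalSpace α]
    [TopologicalSpace β] [MeasurableSpace β] [BorelSpace β] {f : α → β} (hf : Continuous f)
    {s : Set β} (hs : MeasurableSet s) : BaireMeasurableSet (f ⁻¹' s) := by
  borelize α
  exact (hs.preimage hf.measurable).baireMeasurableSet

theorem BaireMeasurableSet.not_isMeagre_inter_iff {α : Type*} [TopologicalSpace α]
    [BaireSpace α] {s w : Set α} (hs : BaireMeasurableSet s) (hw : IsOpen w) :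
    ¬ IsMeagre (w ∩ s) ↔ ∃ o, IsOpen o ∧ o ⊆ w ∧ o.Nonempty ∧ IsMeagre (o \ s) := by
  constructor
  · intro hws
    obtain ⟨u, hu, hsu⟩ := hs.residualEq_isOpen
    have hsu' : IsMeagre {x | ¬(x ∈ s ↔ x ∈ u)} := by
      rw [IsMeagre, compl_ofPred]
      simp only [not_not]
      exact Filter.eventuallyEq_set.1 hsu
    refine ⟨w ∩ u, hw.inter hu, inter_subset_left, ?_, ?_⟩
    · by_contra hempty
      rw [not_nonempty_iff_eq_empty] at hempty
      refine hws (hsu'.mono fun x ⟨hxw, hxs⟩ => show ¬_ from fun hxsu => ?_)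
      exact (hempty ▸ ⟨hxw, hxsu.1 hxs⟩ : x ∈ (∅ : Set α))
    · exact hsu'.mono fun x ⟨⟨_, hxu⟩, hxs⟩ => show ¬_ from fun hxsu => hxs (hxsu.2 hxu)
  · rintro ⟨o, ho, how, hne, hos⟩ hws
    refine not_isMeagre_of_isOpen ho hne ((hws.union hos).mono fun x hxo => ?_)
    by_cases hxs : x ∈ s
    · exact Or.inl ⟨how hxo, hxs⟩
    · exact Or.inr ⟨hxo, hxs⟩

namespace PartialAction

variable {G X : Type*} [Group G] (pa : PartialAction G X)

theorem orbitRel_symm {x y : X} (h : pa.orbitRel x y) : pa.orbitRel y x := by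
  obtain ⟨g, hg, rfl⟩ := h
  exact ⟨g⁻¹, pa.mem_dom_inv g x hg, pa.act_inv_act g x hg⟩

theorem orbitRel_trans {x y z : X} (hxy : pa.orbitRel x y) (hyz : pa.orbitRel y z) :
    pa.orbitRel x z := by
  obtain ⟨g, hg, rfl⟩ := hxy
  obtain ⟨k, hk, rfl⟩ := hyz
  exact ⟨k * g, pa.mem_dom_mul k g x hg hk, pa.act_mul k g x hg hk⟩

theorem setOf_orbitRel_eq {x y : X} (h : pa.orbitRel x y) :
    {z | pa.orbitRel x z} = {z | pa.orbitRel y z} :=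
  ext fun _ => ⟨pa.orbitRel_trans (pa.orbitRel_symm h), pa.orbitRel_trans h⟩

theorem mem_dom_mul_inv {g h : G} {x : X} (hx : x ∈ pa.dom h) (hg : x ∈ pa.dom g) :
    pa.act h x ∈ pa.dom (g * h⁻¹) :=
  pa.mem_dom_mul g h⁻¹ _ (pa.mem_dom_inv h x hx) (by rwa [pa.act_inv_act h x hx])

theorem act_mul_inv {g h : G} {x : X} (hx : x ∈ pa.dom h) (hg : x ∈ pa.dom g) :
    pa.act (g * h⁻¹) (pa.act h x) = pa.act g x := by
  rw [pa.act_mul g h⁻¹ _ (pa.mem_dom_inv h x hx) (by rwa [pa.act_inv_act h x hx]),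
    pa.act_inv_act h x hx]

def orbitMap (x : X) (g : pa.stabDom x) : X := pa.act g x

theorem orbitRel_orbitMap (x : X) (g : pa.stabDom x) : pa.orbitRel x (pa.orbitMap x g) :=
  ⟨g, g.2, rfl⟩

section Topology

variable [TopologicalSpace G]

def stabDomHomeomorph [IsTopologicalGroup G] {h : G} {x : X} (hx : x ∈ pa.dom h) :
    pa.stabDom x ≃ₜ pa.stabDom (pa.act h x) where
  toFun g := ⟨g * h⁻¹, pa.mem_dom_mul_inv hx g.2⟩
  invFun g := ⟨g * h, pa.mem_dom_mul g h x hx g.2⟩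
  left_inv g := by ext; simp
  right_inv g := by ext; simp
  continuous_toFun := (continuous_subtype_val.mul continuous_const).subtype_mk _
  continuous_invFun := (continuous_subtype_val.mul continuous_const).subtype_mk _

theorem orbitMap_stabDomHomeomorph [IsTopologicalGroup G] {h : G} {x : X}
    (hx : x ∈ pa.dom h) (g : pa.stabDom x) :
    pa.orbitMap (pa.act h x) (pa.stabDomHomeomorph hx g) = pa.orbitMap x g :=
  pa.act_mul_inv hx g.2

theorem isMeagre_preimage_orbitMap_act_iff [IsTopologicalGroup G] {h : G} {x : X}
    (hx : x ∈ pa.dom h) (S : Set X) :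
    IsMeagre (pa.orbitMap (pa.act h x) ⁻¹' S) ↔ IsMeagre (pa.orbitMap x ⁻¹' S) := by
  have hcomp : pa.orbitMap (pa.act h x) ∘ pa.stabDomHomeomorph hx = pa.orbitMap x :=
    funext (pa.orbitMap_stabDomHomeomorph hx)
  rw [← (pa.stabDomHomeomorph hx).isMeagre_preimage, ← preimage_comp, hcomp]

/-- The witnessing ideal `I_{[x]}`. -/
def orbitIdeal (x : X) : Set (Set X) :=
  {S | S ⊆ {y | pa.orbitRel x y} ∧ IsMeagre (pa.orbitMap x ⁻¹' S)}

theorem orbitIdeal_eq_of_orbitRel [IsTopologicalGroup G] {x y : X} (hxy : pa.orbitRel x y) :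
    pa.orbitIdeal x = pa.orbitIdeal y := by
  obtain ⟨h, hx, rfl⟩ := hxy
  ext S
  simp only [orbitIdeal, mem_ofPred_eq, pa.setOf_orbitRel_eq ⟨h, hx, rfl⟩,
    pa.isMeagre_preimage_orbitMap_act_iff hx]

/-- The Vaught transform `A^{△V}`, applied to the sections `{y | (x, y) ∈ A}` of a relation. -/
def vaughtDeltaRel (A : Set (X × X)) (V : Set G) : Set X :=
  {x | ¬ IsMeagre (Subtype.val ⁻¹' V ∩ pa.orbitMap x ⁻¹' (Prod.mk x ⁻¹' A))}

theorem vaughtDeltaRel_iUnion {ι : Type*} [Countable ι] (A : ι → Set (X × X)) (V : Set G) :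
    pa.vaughtDeltaRel (⋃ i, A i) V = ⋃ i, pa.vaughtDeltaRel (A i) V := by
  ext x
  simp only [vaughtDeltaRel, preimage_iUnion, inter_iUnion, mem_ofPred_eq, mem_iUnion]
  exact ⟨fun h => by_contra fun hall => h (isMeagre_iUnion (not_exists_not.1 hall)),
    fun ⟨i, hi⟩ h => hi (h.mono (subset_iUnion_of_subset i subset_rfl))⟩

theorem setOf_mem_orbitIdeal_eq (A : Set (X × X)) :
    {x | {y | pa.orbitRel x y ∧ (x, y) ∈ A} ∈ pa.orbitIdeal x} =
      (pa.vaughtDeltaRel A univ)ᶜ := by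
  ext x
  have hpre : pa.orbitMap x ⁻¹' {y | pa.orbitRel x y ∧ (x, y) ∈ A} =
      pa.orbitMap x ⁻¹' (Prod.mk x ⁻¹' A) :=
    ext fun g => and_iff_right (pa.orbitRel_orbitMap x g)
  simp only [orbitIdeal, vaughtDeltaRel, mem_ofPred_eq, mem_compl_iff, preimage_univ, univ_inter,
    not_not, hpre]
  exact and_iff_right fun y hy => hy.1

theorem continuous_orbitMap [TopologicalSpace X]
    (hcont : ContinuousOn (fun p : G × X => pa.act p.1 p.2) {p : G × X | p.2 ∈ pa.dom p.1})
    (x : X) : Continuous (pa.orbitMap x) :=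
  hcont.comp_continuous (continuous_subtype_val.prodMk continuous_const) fun g => g.2

theorem isGδ_stabDom [TopologicalSpace X] (hGδ : IsGδ {p : G × X | p.2 ∈ pa.dom p.1})
    (x : X) : IsGδ (pa.stabDom x) :=
  hGδ.preimage (continuous_id.prodMk continuous_const)

variable [∀ x, BaireSpace (pa.stabDom x)]

theorem vaughtDeltaRel_compl {B : Set (Set G)} (hB : IsTopologicalBasis B) {A : Set (X × X)}
    (hA : ∀ x, BaireMeasurableSet (pa.orbitMap x ⁻¹' (Prod.mk x ⁻¹' A)))
    {V : Set G} (hV : IsOpen V) :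
    pa.vaughtDeltaRel Aᶜ V =
      ⋃ b ∈ {b ∈ B | b ⊆ V}, pa.vaughtDeltaRel univ b \ pa.vaughtDeltaRel A b := by
  ext x
  have hVx : IsOpen (Subtype.val ⁻¹' V : Set (pa.stabDom x)) :=
    hV.preimage continuous_subtype_val
  simp only [vaughtDeltaRel, mem_ofPred_eq, mem_iUnion, mem_sdiff, exists_prop,
    preimage_compl, preimage_univ, inter_univ, not_not]
  rw [(hA x).compl.not_isMeagre_inter_iff hVx]
  simp only [sdiff_compl]
  constructor
  · rintro ⟨o, ho, hoV, ⟨t, hto⟩, hoA⟩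
    obtain ⟨o', ho', rfl⟩ := isOpen_induced_iff.1 ho
    obtain ⟨b, hbB, htb, hbo⟩ :=
      hB.exists_subset_of_mem_open (a := t.1) (u := o' ∩ V) ⟨hto, hoV hto⟩ (ho'.inter hV)
    refine ⟨b, ⟨hbB, fun g hg => (hbo hg).2⟩, ?_, hoA.mono ?_⟩
    · exact not_isMeagre_of_isOpen ((hB.isOpen hbB).preimage continuous_subtype_val) ⟨t, htb⟩
    · exact inter_subset_inter_left _ fun g hg => (hbo hg).1
  · rintro ⟨b, ⟨hbB, hbV⟩, hb, hbA⟩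
    exact ⟨_, (hB.isOpen hbB).preimage continuous_subtype_val, fun g hg => hbV hg,
      nonempty_of_not_isMeagre hb, hbA⟩

theorem orbit_notMem_orbitIdeal (x : X) : {y | pa.orbitRel x y} ∉ pa.orbitIdeal x := by
  rintro ⟨-, hmeagre⟩
  have hpre : pa.orbitMap x ⁻¹' {y | pa.orbitRel x y} = univ :=
    eq_univ_of_forall (pa.orbitRel_orbitMap x)
  rw [hpre] at hmeagre
  exact not_isMeagre_of_isOpen isOpen_univ ⟨⟨1, pa.mem_dom_one x⟩, trivial⟩ hmeagre

variable [TopologicalSpace X]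

theorem vaughtDeltaRel_of_isOpen
    (hcont : ContinuousOn (fun p : G × X => pa.act p.1 p.2) {p : G × X | p.2 ∈ pa.dom p.1})
    {U : Set (X × X)} (hU : IsOpen U) {V : Set G} (hV : IsOpen V) :
    pa.vaughtDeltaRel U V = ⋃ g ∈ V, {x | x ∈ pa.dom g ∧ (x, pa.act g x) ∈ U} := by
  ext x
  simp only [mem_iUnion, mem_ofPred_eq, exists_prop]
  constructor
  · intro hx
    obtain ⟨g, hgV, hgU⟩ := nonempty_of_not_isMeagre hx
    exact ⟨g, hgV, g.2, hgU⟩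
  · rintro ⟨g, hgV, hgx, hgU⟩
    have hopen : IsOpen (Subtype.val ⁻¹' V ∩ pa.orbitMap x ⁻¹' (Prod.mk x ⁻¹' U)) :=
      (hV.preimage continuous_subtype_val).inter
        ((hU.preimage (Continuous.prodMk_right x)).preimage (pa.continuous_orbitMap hcont x))
    exact not_isMeagre_of_isOpen hopen ⟨⟨g, hgx⟩, hgV, hgU⟩

theorem isOpen_vaughtDeltaRel (hdom : ∀ g, IsOpen (pa.dom g))
    (hcont : ContinuousOn (fun p : G × X => pa.act p.1 p.2) {p : G × X | p.2 ∈ pa.dom p.1})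
    {U : Set (X × X)} (hU : IsOpen U) {V : Set G} (hV : IsOpen V) :
    IsOpen (pa.vaughtDeltaRel U V) := by
  rw [pa.vaughtDeltaRel_of_isOpen hcont hU hV]
  refine isOpen_biUnion fun g _ => ?_
  have : ContinuousOn (fun x : X => (x, pa.act g x)) (pa.dom g) :=
    continuousOn_id.prodMk (hcont.comp (Continuous.prodMk_right g).continuousOn fun _ hx => hx)
  exact this.isOpen_inter_preimage (hdom g) hU

theorem measurableSet_vaughtDeltaRel [SecondCountableTopology G] [SecondCountableTopology X]
    [MeasurableSpace X] [BorelSpace X] (hdom : ∀ g, IsOpen (pa.dom g))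
    (hcont : ContinuousOn (fun p : G × X => pa.act p.1 p.2) {p : G × X | p.2 ∈ pa.dom p.1})
    {A : Set (X × X)} (hA : MeasurableSet A) {V : Set G} (hV : IsOpen V) :
    MeasurableSet (pa.vaughtDeltaRel A V) := by
  obtain ⟨B, hBc, -, hB⟩ := exists_countable_basis G
  induction A, hA using MeasurableSet.induction_on_open generalizing V with
  | isOpen U hU => exact (pa.isOpen_vaughtDeltaRel hdom hcont hU hV).measurableSet
  | compl A hA ih =>
    rw [pa.vaughtDeltaRel_compl hB (fun x => (pa.continuous_orbitMap hcont x)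
      |>.baireMeasurableSet_preimage (measurable_prodMk_left hA)) hV]
    exact .biUnion (hBc.mono (sep_subset _ _)) fun b hb =>
      (pa.isOpen_vaughtDeltaRel hdom hcont isOpen_univ (hB.isOpen hb.1)).measurableSet.diff
        (ih (hB.isOpen hb.1))
  | iUnion A _ _ ih =>
    rw [pa.vaughtDeltaRel_iUnion]
    exact .iUnion fun i => ih i hV

end Topology

end PartialAction

/-- the orbit equivalence relation `E^p_G` of a continuous partial action of
a Polish group on a Polish space (with `G*X` a `G_δ` set) is idealistic: one can assign to
each orbit `[x]` a σ-ideal `I x` of subsets of `[x]` (depending only on the class), with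
`[x] ∉ I x`, such that for every Borel `A ⊆ X × X` the set
`{x : {y ∈ [x] : (x,y) ∈ A} ∈ I [x]}` is Borel. -/
theorem orbitRel_idealistic {G X : Type*} [Group G] [TopologicalSpace G] [IsTopologicalGroup G]
    [PolishSpace G] [TopologicalSpace X] [PolishSpace X]
    [MeasurableSpace X] [BorelSpace X]
    (pa : PartialAction G X)
    (hdom : ∀ g, IsOpen (pa.dom g))
    (hcont : ContinuousOn (fun p : G × X => pa.act p.1 p.2) {p : G × X | p.2 ∈ pa.dom p.1})
    (hGδ : IsGδ {p : G × X | p.2 ∈ pa.dom p.1}) :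
    ∃ I : X → Set (Set X),
      -- the ideal depends only on the equivalence class
      (∀ x y, pa.orbitRel x y → I x = I y) ∧
      -- `I x` is a σ-ideal of subsets of the class `[x] = {y | x E^p_G y}`
      (∀ x, ∀ S ∈ I x, S ⊆ {y | pa.orbitRel x y}) ∧
      (∀ x, (∅ : Set X) ∈ I x) ∧
      (∀ x, ∀ S ∈ I x, ∀ T ⊆ S, T ∈ I x) ∧
      (∀ x, ∀ f : ℕ → Set X, (∀ n, f n ∈ I x) → (⋃ n, f n) ∈ I x) ∧
      -- the class itself is not in the ideal
      (∀ x, {y | pa.orbitRel x y} ∉ I x) ∧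
      -- for every Borel `A ⊆ X × X`, the set `A_I` is Borel
      (∀ A : Set (X × X), MeasurableSet A →
        MeasurableSet {x : X | {y | pa.orbitRel x y ∧ (x, y) ∈ A} ∈ I x}) := by
  have : ∀ x, BaireSpace (pa.stabDom x) := fun x =>
    (pa.isGδ_stabDom hGδ x).baireSpace_of_polishSpace
  refine ⟨pa.orbitIdeal, fun _ _ => pa.orbitIdeal_eq_of_orbitRel, fun _ _ hS => hS.1,
    fun _ => ⟨empty_subset _, by simpa using IsMeagre.empty⟩,
    fun _ _ hS _ hTS => ⟨hTS.trans hS.1, hS.2.mono (preimage_mono hTS)⟩,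
    fun _ f hf => ⟨iUnion_subset fun n => (hf n).1, ?_⟩, pa.orbit_notMem_orbitIdeal,
    fun A hA => ?_⟩
  · rw [preimage_iUnion]
    exact isMeagre_iUnion fun n => (hf n).2
  · rw [pa.setOf_mem_orbitIdeal_eq]
    exact (pa.measurableSet_vaughtDeltaRel hdom hcont hA isOpen_univ).compl
end

section
/- Let m be a continuous topological partial action of a Polish group G on a Polish space X with G*X a G_δ subset of G × X. Then the orbit equivalence relation \widehat{E}^p_G of the partial action \widehat{m} on G × X is G_δ in (G × X)², and it admits a Borel selector. -/
/-!
Writing `u = h'⁻¹ h`, `(h, x) Ê (h', x')` says that `(u, x)` lies in the `G_δ` set `G*X` and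
`x' = u · x`, an equation between functions continuous on that set; so `Ê` is `G_δ`. Each
`m̂_u` is continuous on its open domain `G × dom u`, so `Ê`-saturations of open sets are open.

An equivalence relation `E = ⋂ₙ Oₙ` (`Oₙ` open) with these two properties on a Polish space has a
Borel selector. From the class `c` of `p` build a nested sequence of basic balls, each the least
index satisfying a condition that refers to `c` only through the open conditions "`B` meets `c`";
the centres converge to a point `x c` depending measurably on `p`. The conditions make
`{r ∈ c | (r, x c) ∈ Oₙ}` dense in `c` for every `n`, so Baire category in `closure c` gives
`r` with `p E r E x c`.
-/

open Set Filter Topology Metric TopologicalSpace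

theorem IsGδ.setOf_eq_of_continuousOn {α β : Type*} [TopologicalSpace α] [PerfectlyNormalSpace α]
    [TopologicalSpace β] [T2Space β] {s : Set α} {f g : α → β} (hs : IsGδ s)
    (hf : ContinuousOn f s) (hg : ContinuousOn g s) : IsGδ {x | x ∈ s ∧ f x = g x} := by
  set A := {x | x ∈ s ∧ f x = g x}
  have hA : A = s ∩ closure A := by
    refine subset_antisymm (fun x hx => ⟨hx.1, subset_closure hx⟩) fun x hx => ⟨hx.1, ?_⟩
    exact EqOn.of_subset_closure (fun y hy => hy.2) (hf.mono inter_subset_left)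
      (hg.mono inter_subset_left) (fun y hy => ⟨hy.1, subset_closure hy⟩) inter_subset_right hx
  rw [hA]
  exact hs.inter isClosed_closure.isGδ

theorem exists_forall_mem_of_subset_closure_inter {P : Type*} [PseudoEMetricSpace P]
    [CompleteSpace P] {c : Set P} (hc : c.Nonempty) {W : ℕ → Set P} (hW : ∀ n, IsOpen (W n))
    (hdense : ∀ n, c ⊆ closure (W n ∩ c)) : ∃ r, ∀ n, r ∈ W n := by
  have : CompleteSpace (closure c) := IsClosed.completeSpace_coe (hs := isClosed_closure)
  have : Nonempty (closure c) := (hc.mono subset_closure).to_subtype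
  have hV : Dense (⋂ n, ((↑) : closure c → P) ⁻¹' W n) := by
    refine dense_iInter_of_isOpen_nat (fun n => (hW n).preimage continuous_subtype_val)
      fun n => Subtype.dense_iff.2 ?_
    rw [Subtype.image_preimage_coe]
    refine closure_minimal (hdense n) isClosed_closure |>.trans (closure_mono ?_)
    exact fun x hx => ⟨subset_closure hx.2, hx.1⟩
  obtain ⟨r, hr⟩ := hV.nonempty
  exact ⟨r, fun n => mem_iInter.1 hr n⟩

theorem measurable_sInf_setOf_nat {α : Type*} [MeasurableSpace α] {q : α → ℕ → Prop}
    (hq : ∀ j, Measurable fun a => q a j) (hex : ∀ a, ∃ j, q a j) :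
    Measurable fun a => sInf {j | q a j} := by
  classical
  convert measurable_find hex fun j => measurableSet_setOfPred.2 (hq j) using 2 with a
  exact Nat.sInf_def (hex a)

namespace BorelSelector

variable {P : Type*}

theorem setOf_rel_prod_subset {O : ℕ → Set (P × P)} {E : P → P → Prop} (hE : Equivalence E)
    (hEO : {z : P × P | E z.1 z.2} = ⋂ n, O n) (p : P) (n : ℕ) :
    {q | E p q} ×ˢ {q | E p q} ⊆ O n :=
  fun _ hz => mem_iInter.1 (hEO.subset (hE.trans (hE.symm hz.1) hz.2)) n

variable [MetricSpace P] (u : ℕ → P) (O : ℕ → Set (P × P))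

def basicBall (j : ℕ) : Set P := ball (u j.unpair.1) ((1 / 2) ^ j.unpair.2)

/-- Stage `k` encodes a pair `⟪n, m⟫`: it makes the limit point `O n`-related to a point of `c`
in the ball `m` whenever that ball meets `c`. -/
def IsNextBall (c : Set P) (k l j : ℕ) : Prop :=
  (basicBall u j ∩ c).Nonempty ∧ k + 1 ≤ j.unpair.2 ∧ closure (basicBall u j) ⊆ basicBall u l ∧
    ((basicBall u k.unpair.2 ∩ c).Nonempty →
      ∃ i, basicBall u i ×ˢ basicBall u j ⊆ O k.unpair.1 ∧
        (basicBall u k.unpair.2 ∩ basicBall u i ∩ c).Nonempty)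

noncomputable def ballChain (c : Set P) : ℕ → ℕ
  | 0 => sInf {j | (basicBall u j ∩ c).Nonempty}
  | k + 1 => sInf {j | IsNextBall u O c k (ballChain c k) j}

noncomputable def chainLimit [Nonempty P] (c : Set P) : P :=
  limUnder atTop fun k => u (ballChain u O c k).unpair.1

variable {u O}

theorem center_mem_basicBall (j : ℕ) : u j.unpair.1 ∈ basicBall u j :=
  mem_ball_self (by positivity)

theorem exists_basicBall (hu : DenseRange u) {U : Set P} (hU : IsOpen U) {a : P} (ha : a ∈ U)
    (K : ℕ) : ∃ j, K ≤ j.unpair.2 ∧ a ∈ basicBall u j ∧ closure (basicBall u j) ⊆ U := by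
  obtain ⟨ε, hε, hball⟩ := Metric.isOpen_iff.1 hU a ha
  obtain ⟨N₀, hN₀⟩ := exists_pow_lt_of_lt_one (half_pos hε) (by norm_num : (1 / 2 : ℝ) < 1)
  set N := max N₀ K
  have hN : (1 / 2 : ℝ) ^ N < ε / 2 :=
    (pow_le_pow_of_le_one (by norm_num) (by norm_num) (le_max_left _ _)).trans_lt hN₀
  obtain ⟨m, hm⟩ := hu.exists_dist_lt a (by positivity : (0 : ℝ) < (1 / 2) ^ N)
  refine ⟨Nat.pair m N, ?_, ?_, ?_⟩ <;> simp only [basicBall, Nat.unpair_pair]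
  · exact le_max_right _ _
  · exact mem_ball.2 hm
  · refine closure_ball_subset_closedBall.trans fun z hz => hball (mem_ball.2 ?_)
    calc dist z a ≤ dist z (u m) + dist a (u m) := dist_triangle_right _ _ _
      _ < ε := by linarith [mem_closedBall.1 hz]

section Chain

variable (hu : DenseRange u) (hO : ∀ n, IsOpen (O n)) {c : Set P} (hcO : ∀ n, c ×ˢ c ⊆ O n)
include hu hO hcO

theorem exists_isNextBall (k : ℕ) {l : ℕ} (hl : (basicBall u l ∩ c).Nonempty) :
    ∃ j, IsNextBall u O c k l j := by
  obtain ⟨a, hal, hac⟩ := hl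
  by_cases hm : (basicBall u k.unpair.2 ∩ c).Nonempty
  · obtain ⟨r, hrm, hrc⟩ := hm
    obtain ⟨U, V, hU, hV, hrU, haV, hUV⟩ :=
      isOpen_prod_iff.1 (hO k.unpair.1) r a (hcO _ ⟨hrc, hac⟩)
    obtain ⟨i, -, hri, hiU⟩ := exists_basicBall hu hU hrU 0
    obtain ⟨j, hjk, haj, hjsub⟩ := exists_basicBall hu (isOpen_ball.inter hV) ⟨hal, haV⟩ (k + 1)
    refine ⟨j, ⟨a, haj, hac⟩, hjk, fun z hz => (hjsub hz).1, fun _ => ⟨i, ?_, r, ⟨hrm, hri⟩, hrc⟩⟩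
    exact fun z hz => hUV ⟨hiU (subset_closure hz.1), (hjsub (subset_closure hz.2)).2⟩
  · obtain ⟨j, hjk, haj, hjsub⟩ := exists_basicBall hu isOpen_ball hal (k + 1)
    exact ⟨j, ⟨a, haj, hac⟩, hjk, hjsub, fun h => absurd h hm⟩

variable (hc : c.Nonempty)
include hc

theorem basicBall_ballChain_inter_nonempty :
    ∀ k, (basicBall u (ballChain u O c k) ∩ c).Nonempty
  | 0 => by
    obtain ⟨a, ha⟩ := hc
    obtain ⟨j, -, hj, -⟩ := exists_basicBall hu isOpen_univ (mem_univ a) 0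
    exact Nat.sInf_mem (s := {j | (basicBall u j ∩ c).Nonempty}) ⟨j, a, hj, ha⟩
  | k + 1 => (Nat.sInf_mem (exists_isNextBall hu hO hcO k
      (basicBall_ballChain_inter_nonempty k))).1

theorem isNextBall_ballChain (k : ℕ) :
    IsNextBall u O c k (ballChain u O c k) (ballChain u O c (k + 1)) :=
  Nat.sInf_mem (exists_isNextBall hu hO hcO k (basicBall_ballChain_inter_nonempty hu hO hcO hc k))

theorem basicBall_ballChain_antitone {k n : ℕ} (hkn : k ≤ n) :
    basicBall u (ballChain u O c n) ⊆ basicBall u (ballChain u O c k) := by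
  induction n, hkn using Nat.le_induction with
  | base => exact subset_rfl
  | succ n _ ih =>
    exact subset_closure.trans ((isNextBall_ballChain hu hO hcO hc n).2.2.1.trans ih)

theorem basicBall_ballChain_subset_ball (k : ℕ) :
    basicBall u (ballChain u O c k) ⊆ ball (u (ballChain u O c k).unpair.1) ((1 / 2) ^ k) := by
  refine ball_subset_ball (pow_le_pow_of_le_one (by norm_num) (by norm_num) ?_)
  cases k with
  | zero => exact Nat.zero_le _
  | succ k => exact (isNextBall_ballChain hu hO hcO hc k).2.1

theorem tendsto_chainLimit [CompleteSpace P] [Nonempty P] :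
    Tendsto (fun k => u (ballChain u O c k).unpair.1) atTop (𝓝 (chainLimit u O c)) := by
  refine (cauchySeq_of_le_tendsto_0 (fun N => 2 * (1 / 2 : ℝ) ^ N) (fun n m N hn hm => ?_)
    ?_).tendsto_limUnder
  · have hmem : ∀ n, N ≤ n → dist (u (ballChain u O c n).unpair.1)
        (u (ballChain u O c N).unpair.1) < (1 / 2) ^ N := fun n hn =>
      basicBall_ballChain_subset_ball hu hO hcO hc N
        (basicBall_ballChain_antitone hu hO hcO hc hn (center_mem_basicBall _))
    linarith [dist_triangle_right (u (ballChain u O c n).unpair.1)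
      (u (ballChain u O c m).unpair.1) (u (ballChain u O c N).unpair.1), hmem n hn, hmem m hm]
  · simpa using (tendsto_pow_atTop_nhds_zero_of_lt_one (by norm_num : (0 : ℝ) ≤ 1 / 2)
      (by norm_num)).const_mul 2

theorem chainLimit_mem_closure [CompleteSpace P] [Nonempty P] (k : ℕ) :
    chainLimit u O c ∈ closure (basicBall u (ballChain u O c k)) :=
  mem_closure_of_tendsto (tendsto_chainLimit hu hO hcO hc) <|
    eventually_atTop.2 ⟨k, fun _ hn =>
      basicBall_ballChain_antitone hu hO hcO hc hn (center_mem_basicBall _)⟩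

theorem exists_mem_prod_chainLimit_mem [CompleteSpace P] [Nonempty P] (n : ℕ) {m : ℕ}
    (hm : (basicBall u m ∩ c).Nonempty) :
    ∃ r ∈ basicBall u m ∩ c, (r, chainLimit u O c) ∈ O n := by
  have hstep := (isNextBall_ballChain hu hO hcO hc (Nat.pair n m)).2.2.2
  simp only [Nat.unpair_pair] at hstep
  obtain ⟨i, hbox, r, ⟨hrm, hri⟩, hrc⟩ := hstep hm
  exact ⟨r, ⟨hrm, hrc⟩, hbox ⟨hri, (isNextBall_ballChain hu hO hcO hc _).2.2.1
    (chainLimit_mem_closure hu hO hcO hc _)⟩⟩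

end Chain


section Measurability

variable {α : Type*} [MeasurableSpace α] {C : α → Set P}
  (hC : ∀ U, IsOpen U → MeasurableSet {a | (U ∩ C a).Nonempty})
include hC

theorem measurable_isNextBall (k l j : ℕ) : Measurable fun a => IsNextBall u O (C a) k l j := by
  have hmeets : ∀ U, IsOpen U → Measurable fun a => (U ∩ C a).Nonempty :=
    fun U hU => measurableSet_setOfPred.1 (hC U hU)
  exact (hmeets _ isOpen_ball).and <| measurable_const.and <| measurable_const.and <|
    (hmeets _ isOpen_ball).imp <| .exists fun _ =>
      measurable_const.and (hmeets _ (isOpen_ball.inter isOpen_ball))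

theorem measurable_ballChain (hu : DenseRange u) (hO : ∀ n, IsOpen (O n))
    (hCne : ∀ a, (C a).Nonempty) (hCO : ∀ a n, C a ×ˢ C a ⊆ O n) :
    ∀ k, Measurable fun a => ballChain u O (C a) k
  | 0 => by
    refine measurable_sInf_setOf_nat (fun j => measurableSet_setOfPred.1 (hC _ isOpen_ball))
      fun a => ?_
    obtain ⟨b, hb⟩ := hCne a
    obtain ⟨j, -, hj, -⟩ := exists_basicBall hu isOpen_univ (mem_univ b) 0
    exact ⟨j, b, hj, hb⟩
  | k + 1 => by
    have hstep : ∀ j, Measurable fun a => IsNextBall u O (C a) k (ballChain u O (C a) k) j :=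
      fun j => (measurable_from_prod_countable_left
        (f := fun al : α × ℕ => IsNextBall u O (C al.1) k al.2 j)
        fun l => measurable_isNextBall hC k l j).comp
        (measurable_id.prodMk (measurable_ballChain hu hO hCne hCO k))
    exact measurable_sInf_setOf_nat hstep fun a => exists_isNextBall hu hO (hCO a) k
      (basicBall_ballChain_inter_nonempty hu hO (hCO a) (hCne a) k)

theorem measurable_chainLimit [CompleteSpace P] [Nonempty P] [MeasurableSpace P] [BorelSpace P]
    (hu : DenseRange u) (hO : ∀ n, IsOpen (O n)) (hCne : ∀ a, (C a).Nonempty)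
    (hCO : ∀ a n, C a ×ˢ C a ⊆ O n) : Measurable fun a => chainLimit u O (C a) :=
  measurable_of_tendsto_metrizable
    (fun k => (measurable_from_nat (f := fun j => u j.unpair.1)).comp
      (measurable_ballChain hC hu hO hCne hCO k))
    (tendsto_pi_nhds.2 fun a => tendsto_chainLimit hu hO (hCO a) (hCne a))

end Measurability

section Equivalence

variable {E : P → P → Prop} (hE : Equivalence E) (hEO : {z : P × P | E z.1 z.2} = ⋂ n, O n)
include hE hEO

theorem rel_chainLimit [CompleteSpace P] [Nonempty P] (hu : DenseRange u)
    (hO : ∀ n, IsOpen (O n)) (p : P) : E p (chainLimit u O {q | E p q}) := by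
  set x := chainLimit u O {q | E p q}
  have hcO := setOf_rel_prod_subset hE hEO p
  have hc : ({q | E p q} : Set P).Nonempty := ⟨p, hE.refl p⟩
  let W : ℕ → Set P := fun n => {r | (p, r) ∈ O n ∧ (r, x) ∈ O n}
  have hW : ∀ n, IsOpen (W n) := fun n =>
    ((hO n).preimage (Continuous.prodMk_right p)).inter
      ((hO n).preimage (continuous_id.prodMk continuous_const))
  have hdense : ∀ n, {q | E p q} ⊆ closure (W n ∩ {q | E p q}) := by
    intro n a ha
    refine Metric.mem_closure_iff.2 fun ε hε => ?_
    obtain ⟨m, -, ham, hmε⟩ := exists_basicBall hu isOpen_ball (mem_ball_self hε) 0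
    obtain ⟨r, ⟨hrm, hrc⟩, hrx⟩ := exists_mem_prod_chainLimit_mem hu hO hcO hc n ⟨a, ham, ha⟩
    refine ⟨r, ⟨⟨hcO n ⟨hE.refl p, hrc⟩, hrx⟩, hrc⟩, ?_⟩
    simpa [dist_comm] using hmε (subset_closure hrm)
  obtain ⟨r, hr⟩ := exists_forall_mem_of_subset_closure_inter hc hW hdense
  have hpr : (p, r) ∈ {z : P × P | E z.1 z.2} := hEO ▸ mem_iInter.2 fun n => (hr n).1
  have hrx : (r, x) ∈ {z : P × P | E z.1 z.2} := hEO ▸ mem_iInter.2 fun n => (hr n).2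
  exact hE.trans hpr hrx

end Equivalence

end BorelSelector

open BorelSelector in
theorem Equivalence.exists_measurable_selector {P : Type*} [TopologicalSpace P] [PolishSpace P]
    [MeasurableSpace P] [BorelSpace P] {E : P → P → Prop} (hE : Equivalence E)
    (hEδ : IsGδ {z : P × P | E z.1 z.2}) (hsat : ∀ U, IsOpen U → IsOpen {p | ∃ q ∈ U, E p q}) :
    ∃ S : P → P, Measurable S ∧ (∀ p, E (S p) p) ∧ ∀ p q, E p q ↔ S p = S q := by
  rcases isEmpty_or_nonempty P with hP | hP
  · exact ⟨id, measurable_id, isEmptyElim, isEmptyElim⟩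
  let := TopologicalSpace.upgradeIsCompletelyMetrizable P
  obtain ⟨u, hu⟩ := TopologicalSpace.exists_dense_seq P
  obtain ⟨O, hO, hEO⟩ := hEδ.eq_iInter_nat
  have hrel := rel_chainLimit hE hEO hu hO
  refine ⟨fun p => chainLimit u O {q | E p q},
    measurable_chainLimit (fun U hU => (hsat U hU).measurableSet) hu hO (fun p => ⟨p, hE.refl p⟩)
      (setOf_rel_prod_subset hE hEO), fun p => hE.symm (hrel p),
    fun p q => ⟨fun h => ?_, fun h => ?_⟩⟩
  · exact congrArg (chainLimit u O) (Set.ext fun r => ⟨hE.trans (hE.symm h), hE.trans h⟩)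
  · have hp := hrel p
    rw [show chainLimit u O {r | E p r} = chainLimit u O {r | E q r} from h] at hp
    exact hE.trans hp (hE.symm (hrel q))

namespace PartialAction

variable {G X : Type*} [Group G]

theorem hatOrbitRel_iff (pa : PartialAction G X) (p q : G × X) :
    pa.hatOrbitRel p q ↔ p.2 ∈ pa.dom (q.1⁻¹ * p.1) ∧ q.2 = pa.act (q.1⁻¹ * p.1) p.2 := by
  constructor
  · rintro ⟨u, hu, rfl⟩
    have h : (p.1 * u⁻¹)⁻¹ * p.1 = u := by group
    simpa only [h, and_true] using hu
  · rintro ⟨h1, h2⟩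
    refine ⟨q.1⁻¹ * p.1, h1, ?_⟩
    have h : p.1 * (q.1⁻¹ * p.1)⁻¹ = q.1 := by group
    rw [h, ← h2]

theorem hatOrbitRel_equivalence (pa : PartialAction G X) : Equivalence pa.hatOrbitRel where
  refl p := ⟨1, pa.mem_dom_one _, by simp [pa.act_one]⟩
  symm := by
    rintro p _ ⟨u, hu, rfl⟩
    exact ⟨u⁻¹, pa.mem_dom_inv u p.2 hu, by simp [pa.act_inv_act u p.2 hu]⟩
  trans := by
    rintro p _ _ ⟨u, hu, rfl⟩ ⟨v, hv, rfl⟩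
    refine ⟨v * u, pa.mem_dom_mul v u p.2 hu hv, ?_⟩
    rw [pa.act_mul v u p.2 hu hv, mul_inv_rev, mul_assoc]

variable [TopologicalSpace G] [IsTopologicalGroup G] [TopologicalSpace X]

theorem isGδ_setOf_hatOrbitRel [MetrizableSpace G] [MetrizableSpace X] (pa : PartialAction G X)
    (hcont : ContinuousOn (fun p : G × X => pa.act p.1 p.2) {p : G × X | p.2 ∈ pa.dom p.1})
    (hGδ : IsGδ {p : G × X | p.2 ∈ pa.dom p.1}) :
    IsGδ {pq : (G × X) × (G × X) | pa.hatOrbitRel pq.1 pq.2} := by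
  let Ψ : (G × X) × (G × X) → G × X := fun z => (z.2.1⁻¹ * z.1.1, z.1.2)
  have hΨ : Continuous Ψ :=
    (continuous_snd.fst.inv.mul continuous_fst.fst).prodMk continuous_fst.snd
  have hE : {pq : (G × X) × (G × X) | pa.hatOrbitRel pq.1 pq.2} =
      {z | z ∈ Ψ ⁻¹' {p | p.2 ∈ pa.dom p.1} ∧ z.2.2 = pa.act (Ψ z).1 (Ψ z).2} := by
    ext z
    exact pa.hatOrbitRel_iff z.1 z.2
  rw [hE]
  exact (hGδ.preimage hΨ).setOf_eq_of_continuousOn continuous_snd.snd.continuousOn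
    (hcont.comp hΨ.continuousOn fun _ hz => hz)

theorem isOpen_hatOrbitRel_saturation (pa : PartialAction G X) (hdom : ∀ g, IsOpen (pa.dom g))
    (hcont : ContinuousOn (fun p : G × X => pa.act p.1 p.2) {p : G × X | p.2 ∈ pa.dom p.1})
    {U : Set (G × X)} (hU : IsOpen U) : IsOpen {p | ∃ q ∈ U, pa.hatOrbitRel p q} := by
  have hsat : {p | ∃ q ∈ U, pa.hatOrbitRel p q} =
      ⋃ v : G, Prod.snd ⁻¹' pa.dom v ∩ (fun p : G × X => (p.1 * v⁻¹, pa.act v p.2)) ⁻¹' U := by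
    ext p
    simp only [mem_ofPred_eq, mem_iUnion, mem_inter_iff, mem_preimage]
    constructor
    · rintro ⟨_, hqU, v, hv, rfl⟩
      exact ⟨v, hv, hqU⟩
    · rintro ⟨v, hv, hvU⟩
      exact ⟨_, hvU, v, hv, rfl⟩
  rw [hsat]
  refine isOpen_iUnion fun v => ContinuousOn.isOpen_inter_preimage ?_
    ((hdom v).preimage continuous_snd) hU
  have hact : ContinuousOn (pa.act v) (pa.dom v) :=
    hcont.comp (Continuous.prodMk_right v).continuousOn fun _ hx => hx
  exact (continuous_fst.mul continuous_const).continuousOn.prodMk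
    (hact.comp continuous_snd.continuousOn fun _ hp => hp)

end PartialAction

/-- for a continuous partial action of a Polish group on a Polish space with
`G*X` a `G_δ` set, the orbit equivalence relation `\widehat E^p_G` of the partial action
`\widehat m` on `G × X` is `G_δ` in `(G × X)²` and admits a Borel selector. -/
theorem hatOrbitRel_gdelta_selector {G X : Type*} [Group G] [TopologicalSpace G]
    [IsTopologicalGroup G] [PolishSpace G] [TopologicalSpace X] [PolishSpace X]
    [MeasurableSpace G] [BorelSpace G] [MeasurableSpace X] [BorelSpace X]
    (pa : PartialAction G X)
    (hdom : ∀ g, IsOpen (pa.dom g))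
    (hcont : ContinuousOn (fun p : G × X => pa.act p.1 p.2) {p : G × X | p.2 ∈ pa.dom p.1})
    (hGδ : IsGδ {p : G × X | p.2 ∈ pa.dom p.1}) :
    IsGδ {pq : (G × X) × (G × X) | pa.hatOrbitRel pq.1 pq.2} ∧
    ∃ S : G × X → G × X, Measurable S ∧ (∀ p, pa.hatOrbitRel (S p) p) ∧
      (∀ p q, pa.hatOrbitRel p q ↔ S p = S q) := by
  have hEδ := pa.isGδ_setOf_hatOrbitRel hcont hGδ
  exact ⟨hEδ, pa.hatOrbitRel_equivalence.exists_measurable_selector hEδ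
    fun _ hU => pa.isOpen_hatOrbitRel_saturation hdom hcont hU⟩
end
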